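/- The space a(0) is a Lie subalgebra of ⨁_{b∈ℤ/nℤ} gl_n(O), and the projection onto the component b = 0 restricts to an injective Lie algebra homomorphism on a(0) whose image is exactly the Iwahori algebra I; hence a(0) is isomorphic to I as a Lie algebra. -/

import Mathlib

/-- The ring `O = ℂ[[z]]` of formal power series. -/
noncomputable abbrev O : Type := PowerSeries ℂ

/-- Index type for the `n²` generators: `n` diagonal ones, and an upper and a lower one
for each pair `i < j`. -/
abbrev GenIdx (n : ℕ) : Type :=
  Fin n ⊕ ({p : Fin n × Fin n // p.1 < p.2} ⊕ {p : Fin n × Fin n // p.1 < p.2})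

/-- The generators `d_i`, `u_{i,j}(0)`, `l_{i,j}(0)` of `a(0)`.  Indices are 0-based:
the 1-based condition `i ≤ b ≤ j-1` for `1 ≤ i < j ≤ n`, `b ∈ {0,…,n-1}` reads
`i < b ∧ b ≤ j` in 0-based row/column indices `i < j`. -/
noncomputable def gen0 (n : ℕ) : GenIdx n → (Fin n → Matrix (Fin n) (Fin n) O)
  | Sum.inl i => fun _ => Matrix.single i i 1
  | Sum.inr (Sum.inl ⟨(i, j), _⟩) => fun b =>
      if i.val < b.val ∧ b.val ≤ j.val then Matrix.single i j PowerSeries.X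
      else Matrix.single i j 1
  | Sum.inr (Sum.inr ⟨(i, j), _⟩) => fun b =>
      if i.val < b.val ∧ b.val ≤ j.val then Matrix.single j i 1
      else Matrix.single j i PowerSeries.X

/-- The `O`-submodule `a(0)` of `⨁_{b ∈ ℤ/nℤ} gl_n(O)`. -/
noncomputable def aZero (n : ℕ) : Submodule O (Fin n → Matrix (Fin n) (Fin n) O) :=
  Submodule.span O (Set.range (gen0 n))

/-- The Iwahori algebra `I ⊆ gl_n(ℂ[[z]])`: matrices whose entries strictly below the
diagonal have vanishing constant term. -/
def IwahoriSet (n : ℕ) : Set (Matrix (Fin n) (Fin n) O) :=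
  {X | ∀ i j : Fin n, j < i → PowerSeries.constantCoeff (R := ℂ) (X i j) = 0}

/-!
The `b`-th component of each generator is a matrix unit `E_{p,q}` times `z ^ e(p,q,b)` with
`e(p,q,b) = [q < p] + [p < b] - [q < b]` (the `b`-th component is the `0`-th one conjugated by
`diag(z ^ [p < b])`), so `a(0)` consists of the families `b ↦ W_b ⊙ C`
(Hadamard product with the weight matrix `W_b = (z ^ e(p,q,b))`), `C ∈ gl_n(O)`.  The defect
`e(p,r,b) + e(r,q,b) - e(p,q,b) = [r < p] + [q < r] - [q < p] ≥ 0` does not depend on `b`,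
so `(W_b ⊙ C) (W_b ⊙ D) = W_b ⊙ (C ⋆ D)` for a product `⋆` independent of `b`: `a(0)` is closed
under componentwise multiplication, hence under brackets.  At `b = 0` the weights are
`z ^ [q < p]`, which are regular, so the projection is injective, and its image consists of the
matrices whose strictly lower entries are divisible by `z`, i.e. `I`.
-/

open Matrix PowerSeries

namespace Matrix

variable {β R m n : Type*} [CommSemiring R]

def hadamardFamily (W : β → Matrix m n R) : Matrix m n R →ₗ[R] β → Matrix m n R where
  toFun C b := W b ⊙ C
  map_add' C D := funext fun b => hadamard_add (W b) C D
  map_smul' a C := funext fun b => hadamard_smul (W b) C a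

@[simp]
lemma hadamardFamily_apply (W : β → Matrix m n R) (C : Matrix m n R) (b : β) :
    hadamardFamily W C b = W b ⊙ C := rfl

lemma hadamard_single [DecidableEq m] [DecidableEq n] (W : Matrix m n R) (i : m) (j : n)
    (a : R) : W ⊙ single i j a = single i j (W i j * a) := by
  ext p q
  by_cases h : i = p ∧ j = q
  · obtain ⟨rfl, rfl⟩ := h
    simp
  · simp [hadamard_apply, h]

lemma range_hadamard (W : Matrix m n R) :
    Set.range (W ⊙ ·) = {M | ∀ i j, W i j ∣ M i j} := by
  ext M
  refine ⟨?_, fun hM => ?_⟩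
  · rintro ⟨C, rfl⟩ i j
    exact dvd_mul_right _ _
  · choose C hC using hM
    exact ⟨of C, ext fun i j => (hC i j).symm⟩

lemma hadamard_left_injective {W : Matrix m n R} (hW : ∀ i j, IsLeftRegular (W i j)) :
    Function.Injective (W ⊙ ·) :=
  fun _ _ h => ext fun i j => hW i j (congrFun₂ h i j)

lemma image_eval_range_hadamardFamily (W : β → Matrix m n R) (b₀ : β) :
    (fun A => A b₀) '' (LinearMap.range (hadamardFamily W) : Set (β → Matrix m n R)) =
      {M | ∀ i j, W b₀ i j ∣ M i j} := by
  rw [LinearMap.coe_range, ← Set.range_comp, ← range_hadamard]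
  rfl

lemma injOn_eval_range_hadamardFamily {W : β → Matrix m n R} {b₀ : β}
    (hW : ∀ i j, IsLeftRegular (W b₀ i j)) :
    Set.InjOn (fun A => A b₀) (LinearMap.range (hadamardFamily W) : Set (β → Matrix m n R)) := by
  rintro _ ⟨C, rfl⟩ _ ⟨D, rfl⟩ h
  rw [hadamard_left_injective hW h]

lemma range_hadamardFamily_eq_span [Fintype m] [Fintype n] [DecidableEq m] [DecidableEq n]
    (W : β → Matrix m n R) :
    LinearMap.range (hadamardFamily W) =
      Submodule.span R (Set.range fun ij : m × n => fun b => single ij.1 ij.2 (W b ij.1 ij.2)) := by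
  rw [LinearMap.range_eq_map, ← (stdBasis R m n).span_eq, Submodule.map_span, ← Set.range_comp]
  congr 2
  ext ⟨i, j⟩ b : 2
  simp [stdBasis_eq_single, hadamard_single]

variable [Fintype m]

lemma hadamard_mul_hadamard {W : Matrix m m R} {U : m → m → m → R}
    (hW : ∀ p r q, W p r * W r q = U p r q * W p q) (C D : Matrix m m R) :
    (W ⊙ C) * (W ⊙ D) = W ⊙ of fun p q => ∑ r, U p r q * (C p r * D r q) := by
  ext p q
  simp only [mul_apply, hadamard_apply, of_apply, Finset.mul_sum]
  refine Finset.sum_congr rfl fun r _ => ?_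
  rw [mul_mul_mul_comm, hW]
  ring

lemma mul_mem_range_hadamardFamily {W : β → Matrix m m R} {U : m → m → m → R}
    (hW : ∀ b p r q, W b p r * W b r q = U p r q * W b p q) {A B : β → Matrix m m R}
    (hA : A ∈ LinearMap.range (hadamardFamily W)) (hB : B ∈ LinearMap.range (hadamardFamily W)) :
    A * B ∈ LinearMap.range (hadamardFamily W) := by
  obtain ⟨C, rfl⟩ := hA
  obtain ⟨D, rfl⟩ := hB
  exact ⟨_, funext fun b => (hadamard_mul_hadamard (hW b) C D).symm⟩

end Matrix

/-- The exponent `e(p,q,b)` of `z` in the `b`-th component of the generator supported at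
`(p, q)`, read off from `gen0`. -/
def iwahoriExponent {n : ℕ} (p q : Fin n) (b : ℕ) : ℕ :=
  if (p.val < q.val ∧ p.val < b ∧ b ≤ q.val) ∨ (q.val < p.val ∧ ¬(q.val < b ∧ b ≤ p.val))
  then 1 else 0

lemma iwahoriExponent_add {n : ℕ} (p r q : Fin n) (b : ℕ) :
    iwahoriExponent p r b + iwahoriExponent r q b =
      (iwahoriExponent p r 0 + iwahoriExponent r q 0 - iwahoriExponent p q 0) +
        iwahoriExponent p q b := by
  unfold iwahoriExponent
  split_ifs <;> omega

noncomputable def iwahoriWeight (n : ℕ) (b : Fin n) : Matrix (Fin n) (Fin n) O :=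
  of fun p q => X ^ iwahoriExponent p q b.val

lemma iwahoriWeight_mul (n : ℕ) (b p r q : Fin n) :
    iwahoriWeight n b p r * iwahoriWeight n b r q =
      X ^ (iwahoriExponent p r 0 + iwahoriExponent r q 0 - iwahoriExponent p q 0) *
        iwahoriWeight n b p q := by
  simp only [iwahoriWeight, of_apply, ← pow_add]
  rw [iwahoriExponent_add p r q b.val]

lemma gen0_diag (n : ℕ) (i : Fin n) :
    gen0 n (Sum.inl i) = fun b => single i i (iwahoriWeight n b i i) := by
  funext b
  simp only [gen0, iwahoriWeight, iwahoriExponent, of_apply]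
  rw [if_neg (by omega), pow_zero]

lemma gen0_upper (n : ℕ) {i j : Fin n} (h : i < j) :
    gen0 n (Sum.inr (Sum.inl ⟨(i, j), h⟩)) = fun b => single i j (iwahoriWeight n b i j) := by
  have h' : i.val < j.val := h
  funext b
  simp only [gen0, iwahoriWeight, iwahoriExponent, of_apply]
  split_ifs <;> first | omega | simp

lemma gen0_lower (n : ℕ) {i j : Fin n} (h : i < j) :
    gen0 n (Sum.inr (Sum.inr ⟨(i, j), h⟩)) = fun b => single j i (iwahoriWeight n b j i) := by
  have h' : i.val < j.val := h
  funext b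
  simp only [gen0, iwahoriWeight, iwahoriExponent, of_apply]
  split_ifs <;> first | omega | simp

lemma range_gen0 (n : ℕ) :
    Set.range (gen0 n) =
      Set.range fun ij : Fin n × Fin n => fun b => single ij.1 ij.2 (iwahoriWeight n b ij.1 ij.2) := by
  ext A
  constructor
  · rintro ⟨i | ⟨⟨⟨i, j⟩, h⟩ | ⟨⟨i, j⟩, h⟩⟩, rfl⟩
    · exact ⟨(i, i), (gen0_diag n i).symm⟩
    · exact ⟨(i, j), (gen0_upper n h).symm⟩
    · exact ⟨(j, i), (gen0_lower n h).symm⟩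
  · rintro ⟨⟨i, j⟩, rfl⟩
    rcases lt_trichotomy i j with h | rfl | h
    · exact ⟨_, gen0_upper n h⟩
    · exact ⟨_, gen0_diag n i⟩
    · exact ⟨_, gen0_lower n h⟩

lemma aZero_eq_range (n : ℕ) : aZero n = LinearMap.range (hadamardFamily (iwahoriWeight n)) := by
  rw [aZero, range_gen0, range_hadamardFamily_eq_span]

lemma iwahoriWeight_zero (n : ℕ) [NeZero n] (p q : Fin n) :
    iwahoriWeight n 0 p q = X ^ (if q < p then 1 else 0) := by
  simp only [iwahoriWeight, iwahoriExponent, of_apply, Fin.val_zero, Fin.lt_def]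
  exact congrArg _ (if_congr (by omega) rfl rfl)

lemma iwahoriSet_eq (n : ℕ) [NeZero n] :
    IwahoriSet n = {M | ∀ i j, iwahoriWeight n 0 i j ∣ M i j} := by
  ext M
  simp only [IwahoriSet, iwahoriWeight_zero]
  refine forall₂_congr fun i j => ?_
  split_ifs with h <;> simp [h, X_dvd_iff]

theorem statement2_general (n : ℕ) [NeZero n] :
    (∀ A ∈ aZero n, ∀ B ∈ aZero n,
        (fun b => A b * B b - B b * A b) ∈ aZero n) ∧
    Set.InjOn (fun A : Fin n → Matrix (Fin n) (Fin n) O => A 0) (aZero n : Set _) ∧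
    (fun A : Fin n → Matrix (Fin n) (Fin n) O => A 0) '' (aZero n : Set _)
      = IwahoriSet n := by
  have hW := iwahoriWeight_mul n
  have hregular (i j : Fin n) : IsLeftRegular (iwahoriWeight n 0 i j) :=
    (IsRegular.of_ne_zero (pow_ne_zero _ X_ne_zero)).left
  rw [aZero_eq_range, iwahoriSet_eq]
  refine ⟨fun A hA B hB => ?_, injOn_eval_range_hadamardFamily hregular,
    image_eval_range_hadamardFamily _ 0⟩
  show A * B - B * A ∈ _
  exact sub_mem (mul_mem_range_hadamardFamily hW hA hB) (mul_mem_range_hadamardFamily hW hB hA)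

/-- `a(0)` is a Lie subalgebra of `⨁_{b ∈ ℤ/nℤ} gl_n(O)` (it is an
`O`-submodule closed under the componentwise commutator bracket), the projection onto
the component `b = 0` is injective on `a(0)` (and it automatically preserves the
bracket), and its image is exactly the Iwahori algebra `I`; hence `a(0) ≅ I` as Lie
algebras. -/
theorem statement2 (n : ℕ) [NeZero n] (hn : 2 ≤ n) :
    (∀ A ∈ aZero n, ∀ B ∈ aZero n,
        (fun b => A b * B b - B b * A b) ∈ aZero n) ∧
    Set.InjOn (fun A : Fin n → Matrix (Fin n) (Fin n) O => A 0) (aZero n : Set _) ∧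
    (fun A : Fin n → Matrix (Fin n) (Fin n) O => A 0) '' (aZero n : Set _)
      = IwahoriSet n :=
  statement2_general n
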